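/- In a regular multi-pointed category with kernels, a morphism f: X → Y is saturating if and only if Δ_Y* = f* f∘ (as composites of relations). -/

import Mathlib

open CategoryTheory CategoryTheory.Limits

universe v u

namespace Paper

variable {𝒞 : Type u} [Category.{v} 𝒞]

/-- `f` is a regular epimorphism: it is a coequaliser of some pair of morphisms. -/
def IsRegEpi {X Y : 𝒞} (f : X ⟶ Y) : Prop :=
  ∃ (Z : 𝒞) (a b : Z ⟶ X), a ≫ f = b ≫ f ∧
    ∀ {T : 𝒞} (h : X ⟶ T), a ≫ h = b ≫ h → ∃! u : Y ⟶ T, f ≫ u = h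

/-- Regular epimorphisms are pullback-stable. -/
def RegEpisStable (𝒞 : Type u) [Category.{v} 𝒞] : Prop :=
  ∀ {P X Y Z : 𝒞} (p₁ : P ⟶ X) (p₂ : P ⟶ Y) (f : X ⟶ Z) (g : Y ⟶ Z),
    IsPullback p₁ p₂ f g → IsRegEpi g → IsRegEpi p₁

/-- Every kernel pair admits a coequaliser. -/
def KernelPairsHaveCoequalisers (𝒞 : Type u) [Category.{v} 𝒞] : Prop :=
  ∀ {R X Y : 𝒞} (f : X ⟶ Y) (a b : R ⟶ X), IsKernelPair f a b →
    ∃ (Q : 𝒞) (q : X ⟶ Q), a ≫ q = b ≫ q ∧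
      ∀ {T : 𝒞} (h : X ⟶ T), a ≫ h = b ≫ h → ∃! u : Q ⟶ T, q ≫ u = h

/-- A relation from `X` to `Y`: a jointly monomorphic span. -/
structure Rel (𝒞 : Type u) [Category.{v} 𝒞] (X Y : 𝒞) where
  R : 𝒞
  p1 : R ⟶ X
  p2 : R ⟶ Y
  jm : ∀ {Z : 𝒞} (a b : Z ⟶ R), a ≫ p1 = b ≫ p1 → a ≫ p2 = b ≫ p2 → a = b

variable {X Y Z : 𝒞}

/-- `ρ` is a subrelation of `σ`. -/
def Rel.le (ρ σ : Rel 𝒞 X Y) : Prop :=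
  ∃ j : ρ.R ⟶ σ.R, j ≫ σ.p1 = ρ.p1 ∧ j ≫ σ.p2 = ρ.p2

/-- `ρ` and `σ` are the same relation (isomorphic as subobjects of `X × Y`). -/
def Rel.equiv (ρ σ : Rel 𝒞 X Y) : Prop := ρ.le σ ∧ σ.le ρ

/-- The opposite relation. -/
def Rel.op (ρ : Rel 𝒞 X Y) : Rel 𝒞 Y X :=
  ⟨ρ.R, ρ.p2, ρ.p1, fun a b h2 h1 => ρ.jm a b h1 h2⟩

/-- A morphism viewed as a relation. -/
def homRel (f : X ⟶ Y) : Rel 𝒞 X Y :=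
  ⟨X, 𝟙 X, f, fun a b h _ => by simpa using h⟩

/-- The discrete (diagonal) relation on `X`. -/
def diagRel (X : 𝒞) : Rel 𝒞 X X := homRel (𝟙 X)

/-- The kernel pair `Eq(f)` of `f` as a relation on `X`. -/
noncomputable def kerPairRel [HasPullbacks 𝒞] (f : X ⟶ Y) : Rel 𝒞 X X :=
  ⟨pullback f f, pullback.fst f f, pullback.snd f f,
    fun a b h1 h2 => pullback.hom_ext h1 h2⟩

/-- `τ` is the composite `σρ` (first `ρ` from `X` to `Y`, then `σ` from `Y` to `Z`),
i.e. the (regular epi, jointly mono) factorisation of the span induced on the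
pullback of `ρ.p2` and `σ.p1`. -/
def IsRelComp [HasPullbacks 𝒞] (σ : Rel 𝒞 Y Z) (ρ : Rel 𝒞 X Y) (τ : Rel 𝒞 X Z) : Prop :=
  ∃ e : pullback ρ.p2 σ.p1 ⟶ τ.R, IsRegEpi e ∧
    e ≫ τ.p1 = pullback.fst ρ.p2 σ.p1 ≫ ρ.p1 ∧
    e ≫ τ.p2 = pullback.snd ρ.p2 σ.p1 ≫ σ.p2

def Rel.IsReflexive (ρ : Rel 𝒞 X X) : Prop :=
  ∃ r : X ⟶ ρ.R, r ≫ ρ.p1 = 𝟙 X ∧ r ≫ ρ.p2 = 𝟙 X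

def Rel.IsSymmetric (ρ : Rel 𝒞 X X) : Prop :=
  ∃ s : ρ.R ⟶ ρ.R, s ≫ ρ.p1 = ρ.p2 ∧ s ≫ ρ.p2 = ρ.p1

def Rel.IsTransitive [HasPullbacks 𝒞] (ρ : Rel 𝒞 X X) : Prop :=
  ∃ t : pullback ρ.p2 ρ.p1 ⟶ ρ.R,
    t ≫ ρ.p1 = pullback.fst ρ.p2 ρ.p1 ≫ ρ.p1 ∧
    t ≫ ρ.p2 = pullback.snd ρ.p2 ρ.p1 ≫ ρ.p2

def Rel.IsEquivalence [HasPullbacks 𝒞] (ρ : Rel 𝒞 X X) : Prop :=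
  ρ.IsReflexive ∧ ρ.IsSymmetric ∧ ρ.IsTransitive

/-- A finitely complete category is a Mal'tsev category when every reflexive
relation in it is an equivalence relation. -/
def IsMaltsev (𝒞 : Type u) [Category.{v} 𝒞] [HasPullbacks 𝒞] : Prop :=
  ∀ {X : 𝒞} (ρ : Rel 𝒞 X X), ρ.IsReflexive → ρ.IsEquivalence

/-- A square of type (1): split epimorphisms `f` (with section `s`) and `g`
(with section `t`), regular epimorphisms `c` and `d`, with `f·c = d·g` and
`s·d = c·t`. -/
structure IsSquare1 {A B E D : 𝒞} (f : A ⟶ B) (s : B ⟶ A) (g : E ⟶ D) (t : D ⟶ E)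
    (c : E ⟶ A) (d : D ⟶ B) : Prop where
  sec_f : s ≫ f = 𝟙 B
  sec_g : t ≫ g = 𝟙 D
  regepi_c : IsRegEpi c
  regepi_d : IsRegEpi d
  comm1 : c ≫ f = g ≫ d
  comm2 : d ≫ s = t ≫ c

/-- `N` is an ideal of morphisms. -/
def IsIdeal (N : MorphismProperty 𝒞) : Prop :=
  ∀ {X Y Z : 𝒞} (f : X ⟶ Y) (g : Y ⟶ Z), N f ∨ N g → N (f ≫ g)

/-- `n` is an `N`-kernel of `f`. -/
def IsNKernel (N : MorphismProperty 𝒞) {X Y K : 𝒞} (f : X ⟶ Y) (n : K ⟶ X) : Prop :=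
  N (n ≫ f) ∧ ∀ {Z : 𝒞} (m : Z ⟶ X), N (m ≫ f) → ∃! u : Z ⟶ K, u ≫ n = m

/-- Every morphism admits an `N`-kernel. -/
def HasNKernels (N : MorphismProperty 𝒞) : Prop :=
  ∀ {X Y : 𝒞} (f : X ⟶ Y), ∃ (K : 𝒞) (n : K ⟶ X), IsNKernel N f n

/-- `τ` is the largest star subrelation `ρ*` of the relation `ρ`. -/
def IsLargestStarSub (N : MorphismProperty 𝒞) (ρ τ : Rel 𝒞 X Y) : Prop :=
  τ.le ρ ∧ N τ.p1 ∧ ∀ σ : Rel 𝒞 X Y, σ.le ρ → N σ.p1 → σ.le τ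

/-- `(s1, s2)` is the star-kernel of `f`: the universal star coequalised by `f`. -/
def IsStarKernel (N : MorphismProperty 𝒞) {S X Y : 𝒞} (f : X ⟶ Y) (s1 s2 : S ⟶ X) : Prop :=
  N s1 ∧ s1 ≫ f = s2 ≫ f ∧
    ∀ {T : 𝒞} (t1 t2 : T ⟶ X), N t1 → t1 ≫ f = t2 ≫ f →
      ∃! u : T ⟶ S, u ≫ s1 = t1 ∧ u ≫ s2 = t2

/-- `(ν1, ν2)` is the star of the pullback relation of `(g, δ)`: the universal
pair with `ν1 ∈ N` and `δ·ν1 = g·ν2`. -/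
def IsStarPullbackRel (N : MorphismProperty 𝒞) {W E D P : 𝒞} (δ : W ⟶ D) (g : E ⟶ D)
    (ν1 : P ⟶ W) (ν2 : P ⟶ E) : Prop :=
  N ν1 ∧ ν1 ≫ δ = ν2 ≫ g ∧
    ∀ {T : 𝒞} (t1 : T ⟶ W) (t2 : T ⟶ E), N t1 → t1 ≫ δ = t2 ≫ g →
      ∃! u : T ⟶ P, u ≫ ν1 = t1 ∧ u ≫ ν2 = t2

/-- `f` is a coequaliser of `(s1, s2)`. -/
def IsCoeqOf {S X Y : 𝒞} (f : X ⟶ Y) (s1 s2 : S ⟶ X) : Prop :=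
  s1 ≫ f = s2 ≫ f ∧ ∀ {T : 𝒞} (h : X ⟶ T), s1 ≫ h = s2 ≫ h → ∃! u : Y ⟶ T, f ≫ u = h

/-- Star-regularity: every regular epimorphism is a coequaliser of a star. -/
def StarRegular (𝒞 : Type u) [Category.{v} 𝒞] (N : MorphismProperty 𝒞) : Prop :=
  ∀ {X Y : 𝒞} (f : X ⟶ Y), IsRegEpi f →
    ∃ (S : 𝒞) (s1 s2 : S ⟶ X), N s1 ∧ IsCoeqOf f s1 s2

/-- `f` is saturating: the induced morphism between the `N`-kernels of the
identities is a regular epimorphism. -/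
def Saturating (N : MorphismProperty 𝒞) {X Y : 𝒞} (f : X ⟶ Y) : Prop :=
  ∀ {KX KY : 𝒞} (nX : KX ⟶ X) (nY : KY ⟶ Y), IsNKernel N (𝟙 X) nX → IsNKernel N (𝟙 Y) nY →
    ∀ u : KX ⟶ KY, u ≫ nY = nX ≫ f → IsRegEpi u

/-- `X` is an `N`-trivial object. -/
def NTrivial (N : MorphismProperty 𝒞) (X : 𝒞) : Prop := N (𝟙 X)

/-- The multi-pointed category has enough trivial objects: `N` is a closed ideal and
`N`-trivial objects are closed under subobjects and squares. -/
def EnoughTrivialObjects [HasBinaryProducts 𝒞] (N : MorphismProperty 𝒞) : Prop :=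
  (∀ {X Y : 𝒞} (f : X ⟶ Y), N f → ∃ (T : 𝒞) (p : X ⟶ T) (q : T ⟶ Y),
      NTrivial N T ∧ p ≫ q = f) ∧
  (∀ {S X : 𝒞} (m : S ⟶ X), Mono m → NTrivial N X → NTrivial N S) ∧
  (∀ X : 𝒞, NTrivial N X → NTrivial N (X ⨯ X))

/-- A square of type (1) is a star-regular pushout when `(c g°)* = f° d*`. -/
def IsStarRegularPushout [HasPullbacks 𝒞] (N : MorphismProperty 𝒞) {A B E D : 𝒞}
    (f : A ⟶ B) (g : E ⟶ D) (c : E ⟶ A) (d : D ⟶ B) : Prop :=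
  ∀ (ρ τ μ : Rel 𝒞 D A) (ds : Rel 𝒞 D B),
    IsRelComp (homRel c) (Rel.op (homRel g)) ρ → IsLargestStarSub N ρ τ →
    IsLargestStarSub N (homRel d) ds → IsRelComp (Rel.op (homRel f)) ds μ →
    τ.equiv μ

/-- 2-star-permutability: `Eq(f) Eq(g)* = Eq(g) Eq(f)*` for all regular
epimorphisms `f`, `g` with the same domain. -/
def TwoStarPermutable (𝒞 : Type u) [Category.{v} 𝒞] [HasPullbacks 𝒞]
    (N : MorphismProperty 𝒞) : Prop :=
  ∀ {X Y Z : 𝒞} (f : X ⟶ Y) (g : X ⟶ Z), IsRegEpi f → IsRegEpi g →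
    ∀ (sf sg : Rel 𝒞 X X), IsLargestStarSub N (kerPairRel f) sf →
      IsLargestStarSub N (kerPairRel g) sg →
    ∀ (τ₁ τ₂ : Rel 𝒞 X X), IsRelComp (kerPairRel f) sg τ₁ →
      IsRelComp (kerPairRel g) sf τ₂ → τ₁.equiv τ₂

section Pointed

variable [HasZeroMorphisms 𝒞]

/-- `k` is a kernel of `f`. -/
def IsKernelOf {K X Y : 𝒞} (k : K ⟶ X) (f : X ⟶ Y) : Prop :=
  k ≫ f = 0 ∧ ∀ {Z : 𝒞} (m : Z ⟶ X), m ≫ f = 0 → ∃! u : Z ⟶ K, u ≫ k = m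

/-- `f` is a cokernel of `k`. -/
def IsCokernelOf {X Y K : 𝒞} (f : X ⟶ Y) (k : K ⟶ X) : Prop :=
  k ≫ f = 0 ∧ ∀ {T : 𝒞} (h : X ⟶ T), k ≫ h = 0 → ∃! u : Y ⟶ T, f ≫ u = h

/-- Short exact sequence `K → X ↠ Y`. -/
def IsShortExact {K X Y : 𝒞} (k : K ⟶ X) (f : X ⟶ Y) : Prop :=
  IsKernelOf k f ∧ IsCokernelOf f k

/-- Subtractivity: every reflexive, left punctual relation is right punctual. -/
def IsSubtractive (𝒞 : Type u) [Category.{v} 𝒞] [HasZeroMorphisms 𝒞] : Prop :=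
  ∀ {X : 𝒞} (ρ : Rel 𝒞 X X), ρ.IsReflexive →
    (∃ l : X ⟶ ρ.R, l ≫ ρ.p1 = 𝟙 X ∧ l ≫ ρ.p2 = 0) →
    (∃ r : X ⟶ ρ.R, r ≫ ρ.p1 = 0 ∧ r ≫ ρ.p2 = 𝟙 X)

end Pointed

/-! Let `n_X : N_X → X` and `n_Y : N_Y → Y` be the `N`-kernels of the identities and
`u : N_X → N_Y` the induced morphism. The largest star subrelations are `Δ_Y* = (n_Y, n_Y)` and
`f* = (n_X, f n_X)`, so `f* f°` is the image of the span `(f n_X, f n_X) = (n_Y u, n_Y u)`, that is,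
`n_Y` restricted to the regular image of `u`. Hence `f* f° = Δ_Y*` exactly when the monic part of
the (regular epi, mono) factorisation of `u` is an isomorphism, i.e. when `u` is a regular
epimorphism. -/

theorem isRegEpi_iff_isRegularEpi {X Y : 𝒞} {f : X ⟶ Y} : IsRegEpi f ↔ IsRegularEpi f := by
  constructor
  · rintro ⟨W, a, b, w, hdesc⟩
    exact ⟨⟨{
      W := W, left := a, right := b, w := w
      isColimit := Cofork.IsColimit.ofExistsUnique fun s => hdesc s.π s.condition }⟩⟩
  · rintro ⟨⟨hf⟩⟩
    exact ⟨hf.W, hf.left, hf.right, hf.w, fun h hh => Cofork.IsColimit.existsUnique hf.isColimit h hh⟩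

theorem IsRegEpi.epi {X Y : 𝒞} {f : X ⟶ Y} (hf : IsRegEpi f) : Epi f :=
  have := isRegEpi_iff_isRegularEpi.1 hf
  inferInstance

theorem IsRegEpi.isIso_comp {W X Y : 𝒞} (i : W ⟶ X) [IsIso i] {f : X ⟶ Y} (hf : IsRegEpi f) :
    IsRegEpi (i ≫ f) :=
  isRegEpi_iff_isRegularEpi.2 <| MorphismProperty.RespectsIso.precomp
    (MorphismProperty.regularEpi 𝒞) i f (isRegEpi_iff_isRegularEpi.1 hf)

theorem IsRegEpi.comp_isIso {X Y Z : 𝒞} {f : X ⟶ Y} (hf : IsRegEpi f) (i : Y ⟶ Z) [IsIso i] :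
    IsRegEpi (f ≫ i) :=
  isRegEpi_iff_isRegularEpi.2 <| MorphismProperty.RespectsIso.postcomp
    (MorphismProperty.regularEpi 𝒞) i f (isRegEpi_iff_isRegularEpi.1 hf)

/-- The comparison map from the kernel pair of `q ≫ m` to that of `m` is a composite of two
pullbacks of `q`, hence epi; since it equalises the two projections of the kernel pair of `m`,
these coincide. -/
theorem mono_of_isRegEpi_of_isKernelPair [HasPullbacks 𝒞] (hstab : RegEpisStable 𝒞)
    {R P Q K : 𝒞} {q : P ⟶ Q} {m : Q ⟶ K} {k₁ k₂ : R ⟶ P} (hk : IsKernelPair (q ≫ m) k₁ k₂)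
    (hq : IsRegEpi q) (hqk : k₁ ≫ q = k₂ ≫ q) : Mono m := by
  have hL : IsKernelPair m _ _ := IsPullback.of_hasPullback m m
  have hM := IsPullback.of_hasPullback m (q ≫ m)
  have hp := IsPullback.of_right' hM hL
  have hφ := IsPullback.of_right' hk.flip hM.flip
  refine hL.mono_of_eq_fst_snd ?_
  apply (hstab _ _ _ _ hp hq).epi.left_cancellation
  apply (hstab _ _ _ _ hφ hq).epi.left_cancellation
  simp [hqk]

theorem exists_isRegEpi_mono_fac [HasPullbacks 𝒞] (hcoeq : KernelPairsHaveCoequalisers 𝒞)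
    (hstab : RegEpisStable 𝒞) {P K : 𝒞} (g : P ⟶ K) :
    ∃ (Q : 𝒞) (q : P ⟶ Q) (m : Q ⟶ K), IsRegEpi q ∧ Mono m ∧ q ≫ m = g := by
  have hk : IsKernelPair g _ _ := IsPullback.of_hasPullback g g
  obtain ⟨Q, q, hqk, hdesc⟩ := hcoeq g _ _ hk
  have hq : IsRegEpi q := ⟨_, _, _, hqk, hdesc⟩
  obtain ⟨m, rfl, -⟩ := hdesc g hk.w
  exact ⟨Q, q, m, hq, mono_of_isRegEpi_of_isKernelPair hstab hk hq hqk, rfl⟩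

theorem Rel.le.trans {ρ σ τ : Rel 𝒞 X Y} (h₁ : ρ.le σ) (h₂ : σ.le τ) : ρ.le τ := by
  obtain ⟨j, hj₁, hj₂⟩ := h₁
  obtain ⟨k, hk₁, hk₂⟩ := h₂
  exact ⟨j ≫ k, by simp [hk₁, hj₁], by simp [hk₂, hj₂]⟩

theorem Rel.equiv.trans {ρ σ τ : Rel 𝒞 X Y} (h₁ : ρ.equiv σ) (h₂ : σ.equiv τ) : ρ.equiv τ :=
  ⟨h₁.1.trans h₂.1, h₂.2.trans h₁.2⟩

theorem Rel.le_of_isRegEpi {ρ σ : Rel 𝒞 X Y} {A : 𝒞} {e : A ⟶ ρ.R} (he : IsRegEpi e)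
    (g : A ⟶ σ.R) (h₁ : g ≫ σ.p1 = e ≫ ρ.p1) (h₂ : g ≫ σ.p2 = e ≫ ρ.p2) : ρ.le σ := by
  have := he.epi
  obtain ⟨W, a, b, hab, hdesc⟩ := he
  obtain ⟨d, hd, -⟩ := hdesc g
    (σ.jm _ _ (by simp [h₁, reassoc_of% hab]) (by simp [h₂, reassoc_of% hab]))
  exact ⟨d, by rw [← cancel_epi e, reassoc_of% hd, h₁], by rw [← cancel_epi e, reassoc_of% hd, h₂]⟩

theorem isRelComp_op_homRel_iff [HasPullbacks 𝒞] {f : X ⟶ Y} {σ : Rel 𝒞 X Z} {τ : Rel 𝒞 Y Z} :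
    IsRelComp σ (Rel.op (homRel f)) τ ↔
      ∃ e : σ.R ⟶ τ.R, IsRegEpi e ∧ e ≫ τ.p1 = σ.p1 ≫ f ∧ e ≫ τ.p2 = σ.p2 := by
  have : IsIso (Rel.op (homRel f)).p2 := inferInstanceAs (IsIso (𝟙 X))
  have : IsIso (pullback.snd (Rel.op (homRel f)).p2 σ.p1) := pullback_snd_iso_of_left_iso _ _
  have hfst : pullback.fst (Rel.op (homRel f)).p2 σ.p1 ≫ f =
      pullback.snd (Rel.op (homRel f)).p2 σ.p1 ≫ σ.p1 ≫ f := by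
    rw [← Category.assoc, ← pullback.condition]
    exact congrArg (· ≫ f) (Category.comp_id _).symm
  constructor
  · rintro ⟨e, he, he₁, he₂⟩
    refine ⟨inv (pullback.snd _ σ.p1) ≫ e, he.isIso_comp _, ?_, ?_⟩
    · rw [Category.assoc, he₁]
      exact (inv _ ≫= hfst).trans (IsIso.inv_hom_id_assoc _ _)
    · rw [Category.assoc, he₂, IsIso.inv_hom_id_assoc]
  · rintro ⟨e, he, he₁, he₂⟩
    refine ⟨pullback.snd _ σ.p1 ≫ e, he.isIso_comp _, ?_, ?_⟩
    · exact (Category.assoc _ _ _).trans ((_ ≫= he₁).trans hfst.symm)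
    · rw [Category.assoc, he₂]

abbrev restrictRel {K : 𝒞} (n : K ⟶ X) [Mono n] (g : X ⟶ Y) : Rel 𝒞 X Y :=
  ⟨K, n, n ≫ g, fun _ _ h _ => (cancel_mono n).1 h⟩

theorem IsLargestStarSub.equiv {N : MorphismProperty 𝒞} {ρ σ τ : Rel 𝒞 X Y}
    (hσ : IsLargestStarSub N ρ σ) (hτ : IsLargestStarSub N ρ τ) : σ.equiv τ :=
  ⟨hτ.2.2 σ hσ.1 hσ.2.1, hσ.2.2 τ hτ.1 hτ.2.1⟩

section NKernel

variable {N : MorphismProperty 𝒞} {K : 𝒞} {n : K ⟶ X}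

theorem IsNKernel.mem_of_id (hn : IsNKernel N (𝟙 X) n) : N n := by
  simpa using hn.1

theorem IsNKernel.exists_lift_of_id (hn : IsNKernel N (𝟙 X) n) {m : Z ⟶ X} (hm : N m) :
    ∃ u : Z ⟶ K, u ≫ n = m :=
  (hn.2 m (by simpa using hm)).exists

theorem IsNKernel.mono_of_id (hN : IsIdeal N) (hn : IsNKernel N (𝟙 X) n) : Mono n :=
  ⟨fun a b h => (hn.2 (a ≫ n) (by simpa using hN a n (Or.inr hn.mem_of_id))).unique rfl h.symm⟩

theorem isLargestStarSub_restrictRel (hn : IsNKernel N (𝟙 X) n) [Mono n] (g : X ⟶ Y) :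
    IsLargestStarSub N (homRel g) (restrictRel n g) := by
  refine ⟨⟨n, Category.comp_id n, rfl⟩, hn.mem_of_id, fun σ ⟨j, hj₁, hj₂⟩ hσ => ?_⟩
  obtain ⟨w, hw⟩ := hn.exists_lift_of_id hσ
  have hj : j = σ.p1 := (Category.comp_id j).symm.trans hj₁
  refine ⟨w, hw, ?_⟩
  simpa [reassoc_of% hw, ← hj, homRel] using hj₂

end NKernel

theorem restrictRel_equiv_of_isRegEpi {KX KY : 𝒞} {nX : KX ⟶ X} {nY : KY ⟶ Y} [Mono nX] [Mono nY]
    {f : X ⟶ Y} {u : KX ⟶ KY} (hu : IsRegEpi u) (hcomm : u ≫ nY = nX ≫ f) {σ : Rel 𝒞 X Y}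
    (hσ : σ.equiv (restrictRel nX f)) {τ : Rel 𝒞 Y Y} {e : σ.R ⟶ τ.R} (he : IsRegEpi e)
    (he₁ : e ≫ τ.p1 = σ.p1 ≫ f) (he₂ : e ≫ τ.p2 = σ.p2) :
    (restrictRel nY (𝟙 Y)).equiv τ := by
  obtain ⟨⟨w, hw₁, hw₂⟩, ⟨s, hs₁, hs₂⟩⟩ := hσ
  constructor
  · refine Rel.le_of_isRegEpi hu (s ≫ e) ?_ ?_
    · simp [he₁, reassoc_of% hs₁, hcomm]
    · simp [he₂, hs₂, hcomm]
  · refine Rel.le_of_isRegEpi he (w ≫ u) ?_ ?_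
    · simp [hcomm, reassoc_of% hw₁, he₁]
    · simp [hcomm, he₂, ← hw₂]

/-- In a regular multi-pointed category with kernels, a morphism
`f : X → Y` is saturating iff `Δ_Y* = f* f°` as composites of relations. -/
theorem statement6 [HasFiniteLimits 𝒞]
    (hcoeq : KernelPairsHaveCoequalisers 𝒞) (hstab : RegEpisStable 𝒞)
    (N : MorphismProperty 𝒞) (hN : IsIdeal N) (hker : HasNKernels N)
    {X Y : 𝒞} (f : X ⟶ Y) :
    Saturating N f ↔
      ∀ (dY : Rel 𝒞 Y Y) (fs : Rel 𝒞 X Y) (τ : Rel 𝒞 Y Y),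
        IsLargestStarSub N (diagRel Y) dY → IsLargestStarSub N (homRel f) fs →
        IsRelComp fs (Rel.op (homRel f)) τ → dY.equiv τ := by
  constructor
  · intro hsat dY fs τ hdY hfs hτ
    obtain ⟨KX, nX, hnX⟩ := hker (𝟙 X)
    obtain ⟨KY, nY, hnY⟩ := hker (𝟙 Y)
    have := hnX.mono_of_id hN
    have := hnY.mono_of_id hN
    obtain ⟨u, hu⟩ := hnY.exists_lift_of_id (hN nX f (Or.inl hnX.mem_of_id))
    obtain ⟨e, he, he₁, he₂⟩ := isRelComp_op_homRel_iff.1 hτ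
    exact (hdY.equiv (isLargestStarSub_restrictRel hnY (𝟙 Y))).trans
      (restrictRel_equiv_of_isRegEpi (hsat nX nY hnX hnY u hu) hu
        (hfs.equiv (isLargestStarSub_restrictRel hnX f)) he he₁ he₂)
  · intro hrel KX KY nX nY hnX hnY u hu
    have := hnX.mono_of_id hN
    have := hnY.mono_of_id hN
    obtain ⟨Q, q, m, hq, hm, rfl⟩ := exists_isRegEpi_mono_fac hcoeq hstab u
    have hτ : IsRelComp (restrictRel nX f) (Rel.op (homRel f)) (restrictRel (m ≫ nY) (𝟙 Y)) :=
      isRelComp_op_homRel_iff.2 ⟨q, hq, by simpa using hu, by simpa using hu⟩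
    obtain ⟨⟨s, hs, -⟩, -⟩ := hrel _ _ _ (isLargestStarSub_restrictRel hnY (𝟙 Y))
      (isLargestStarSub_restrictRel hnX f) hτ
    have : IsSplitEpi m := IsSplitEpi.mk' ⟨s, (cancel_mono nY).1 (by simpa using hs)⟩
    have := isIso_of_mono_of_isSplitEpi m
    exact hq.comp_isIso m

end Paper
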